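/- Let K ⊆ ℂ be a bounded set whose upper Minkowski dimension is at most 2 − 4a for some a > 0, i.e. there exists c₁ < ∞ with L₂({z : dist(z, K) ≤ r}) ≤ c₁ r^{4a} for all r ∈ (0, 1). Fix a rectangle F = [x₁,x₂] × [y₁,y₂]. For t ∈ [y₁, y₂] and k ∈ ℕ, let n_t(k) be the number of dyadic subintervals of length 2^{−k} of the horizontal segment L_t ∩ F = {s + it : x₁ ≤ s ≤ x₂} that intersect K. Then ∫_{y₁}^{y₂} 2^{−k} n_t(k) dt ≤ c₁ 2^{−4ak}, and consequently for every c₂ > 0 the Lebesgue measure of {t ∈ [y₁,y₂] : n_t(k) > c₂ 2^{(1−4a)k}} is at most c₁/c₂. -/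

import Mathlib

/-!
Each dyadic interval of length `r = 2^{-k}` on the line `Im z = t` that meets `K` lies in the
slice at height `t` of the closed `r`-neighbourhood of `K`, so `r n_t(k)` is at most the length of
that slice. By Fubini the slice lengths integrate to the area of the neighbourhood, which is at
most `c₁ r^{4a} = c₁ 2^{-4ak}`; the bound on `{t : n_t(k) > c₂ 2^{(1-4a)k}}` is then Markov's
inequality for `t ↦ r n_t(k)`.
-/

open Complex Set Metric MeasureTheory
open scoped ENNReal

noncomputable section

/-- `nHit K x₁ x₂ t k` is the number of dyadic intervals of length `2^{−k}` of the
horizontal segment `{s + it : x₁ ≤ s ≤ x₂}` which intersect `K`. -/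
def nHit (K : Set ℂ) (x₁ x₂ t : ℝ) (k : ℕ) : ℕ :=
  Set.ncard {m : ℤ | ∃ z ∈ K, z.im = t ∧ x₁ ≤ z.re ∧ z.re ≤ x₂ ∧
    (m : ℝ) * 2 ^ (-(k : ℝ)) ≤ z.re ∧ z.re ≤ ((m : ℝ) + 1) * 2 ^ (-(k : ℝ))}

theorem ncard_mul_le_volume_of_Ico_subset {S : Set ℤ} {r : ℝ} {U : Set ℝ}
    (hU : ∀ m ∈ S, Ico (m * r) ((m + 1) * r) ⊆ U) :
    ENNReal.ofReal (S.ncard * r) ≤ volume U := by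
  rcases S.finite_or_infinite with hS | hS
  · have hdisj : Pairwise (Function.onFun Disjoint fun m : ℤ => Ico (m * r) ((m + 1) * r)) := by
      simpa [zsmul_eq_mul] using pairwise_disjoint_Ico_add_zsmul (0 : ℝ) r
    calc ENNReal.ofReal (S.ncard * r)
        = ∑ m ∈ hS.toFinset, volume (Ico (m * r) ((m + 1) * r)) := by
          simp [Real.volume_Ico, ncard_eq_toFinset_card _ hS, ENNReal.ofReal_mul, add_mul]
      _ = volume (⋃ m ∈ hS.toFinset, Ico (m * r) ((m + 1) * r)) :=
          (measure_biUnion_finset (hdisj.set_pairwise _) fun _ _ => measurableSet_Ico).symm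
      _ ≤ volume U := measure_mono <| iUnion₂_subset fun m hm => hU m (by simpa using hm)
  · simp [hS.ncard]

theorem ofReal_mul_nHit_le_volume_horizontalSlice (K : Set ℂ) (x₁ x₂ t : ℝ) (k : ℕ) :
    ENNReal.ofReal (2 ^ (-(k : ℝ)) * nHit K x₁ x₂ t k) ≤
      volume {s : ℝ | infDist ((s : ℂ) + t * I) K ≤ 2 ^ (-(k : ℝ))} := by
  rw [mul_comm]
  refine ncard_mul_le_volume_of_Ico_subset fun m hm s hs => ?_
  obtain ⟨z, hzK, rfl, -, -, hmz, hzm⟩ := hm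
  calc infDist ((s : ℂ) + z.im * I) K ≤ dist ((s : ℂ) + z.im * I) z := infDist_le_dist_of_mem hzK
    _ = |s - z.re| := by rw [dist_of_im_eq (by simp)]; simp [Real.dist_eq]
    _ ≤ 2 ^ (-(k : ℝ)) := abs_sub_le_iff.2 ⟨by linarith [hs.2], by linarith [hs.1]⟩

theorem measurableSet_setOf_ofReal_add_mul_I_mem {A : Set ℂ} (hA : MeasurableSet A) :
    MeasurableSet {p : ℝ × ℝ | (p.1 : ℂ) + p.2 * I ∈ A} :=
  (by fun_prop : Measurable fun p : ℝ × ℝ => (p.1 : ℂ) + p.2 * I) hA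

theorem measurable_volume_horizontalSlice {A : Set ℂ} (hA : MeasurableSet A) :
    Measurable fun t : ℝ => volume {s : ℝ | (s : ℂ) + t * I ∈ A} :=
  measurable_measure_prodMk_right (measurableSet_setOf_ofReal_add_mul_I_mem hA)

theorem lintegral_volume_horizontalSlice {A : Set ℂ} (hA : MeasurableSet A) :
    ∫⁻ t : ℝ, volume {s : ℝ | (s : ℂ) + t * I ∈ A} = volume A := by
  have hA' : A = measurableEquivRealProd ⁻¹' {p : ℝ × ℝ | (p.1 : ℂ) + p.2 * I ∈ A} := by
    ext z; simp [re_add_im]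
  conv_rhs => rw [hA']
  rw [volume_preserving_equiv_real_prod.measure_preimage
    (measurableSet_setOf_ofReal_add_mul_I_mem hA).nullMeasurableSet, Measure.volume_eq_prod,
    Measure.prod_apply_symm (measurableSet_setOf_ofReal_add_mul_I_mem hA)]
  rfl

theorem measure_setOf_infDist_le_pos {X : Type*} [PseudoMetricSpace X] [MeasurableSpace X]
    [Nonempty X] (μ : Measure X) [μ.IsOpenPosMeasure] (s : Set X) {r : ℝ} (hr : 0 < r) :
    0 < μ {x | infDist x s ≤ r} := by
  obtain ⟨x, hx⟩ : ∃ x, infDist x s = 0 := by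
    rcases s.eq_empty_or_nonempty with rfl | ⟨x, hx⟩
    · exact ⟨Classical.arbitrary X, infDist_empty⟩
    · exact ⟨x, infDist_zero_of_mem hx⟩
  refine (measure_closedBall_pos μ x hr).trans_le (measure_mono fun y hy => ?_)
  calc infDist y s ≤ infDist x s + dist y x := infDist_le_infDist_add_dist
    _ ≤ r := by rw [hx, zero_add]; exact hy

theorem integral_le_of_ofReal_le_of_lintegral_le {α : Type*} [MeasurableSpace α]
    {μ : Measure α} {f : α → ℝ} {g : α → ℝ≥0∞} {C : ℝ} (hf : 0 ≤ᵐ[μ] f)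
    (hg : AEMeasurable g μ) (hfg : ∀ᵐ x ∂μ, ENNReal.ofReal (f x) ≤ g x)
    (hgC : ∫⁻ x, g x ∂μ ≤ ENNReal.ofReal C) (hC : 0 ≤ C) :
    ∫ x, f x ∂μ ≤ C := by
  have hg_fin : ∫⁻ x, g x ∂μ ≠ ∞ := ne_top_of_le_ne_top ENNReal.ofReal_ne_top hgC
  calc ∫ x, f x ∂μ ≤ ∫ x, (g x).toReal ∂μ := by
        refine integral_mono_of_nonneg hf (integrable_toReal_of_lintegral_ne_top hg hg_fin) ?_
        filter_upwards [hfg, ae_lt_top' hg hg_fin] with x hfgx hgx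
        exact (ENNReal.ofReal_le_iff_le_toReal hgx.ne).1 hfgx
    _ = (∫⁻ x, g x ∂μ).toReal := integral_toReal hg (ae_lt_top' hg hg_fin)
    _ ≤ C := ENNReal.toReal_le_of_le_ofReal hC hgC

theorem measure_ofReal_mul_le_le_ofReal_div {α : Type*} [MeasurableSpace α]
    {μ : Measure α} {g : α → ℝ≥0∞} {c₁ c₂ p : ℝ} (hg : AEMeasurable g μ)
    (hc₂ : 0 < c₂) (hp : 0 < p) (hgc : ∫⁻ x, g x ∂μ ≤ ENNReal.ofReal (c₁ * p)) :
    μ {x | ENNReal.ofReal (c₂ * p) ≤ g x} ≤ ENNReal.ofReal (c₁ / c₂) := by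
  calc μ {x | ENNReal.ofReal (c₂ * p) ≤ g x}
      ≤ (∫⁻ x, g x ∂μ) / ENNReal.ofReal (c₂ * p) :=
        meas_ge_le_lintegral_div hg (by simp; positivity) ENNReal.ofReal_ne_top
    _ ≤ ENNReal.ofReal (c₁ * p) / ENNReal.ofReal (c₂ * p) := by gcongr
    _ = ENNReal.ofReal (c₁ / c₂) := by
        rw [← ENNReal.ofReal_div_of_pos (by positivity), mul_div_mul_right _ _ hp.ne']

theorem volume_infDist_le_two_rpow_neg_natCast_le {K : Set ℂ} {a c₁ : ℝ}
    (hc₁ : ∀ r : ℝ, 0 < r → r < 1 →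
      volume {z : ℂ | infDist z K ≤ r} ≤ ENNReal.ofReal (c₁ * r ^ (4 * a)))
    {k : ℕ} (hk : 1 ≤ k) :
    volume {z : ℂ | infDist z K ≤ 2 ^ (-(k : ℝ))} ≤
      ENNReal.ofReal (c₁ * 2 ^ (-(4 * a * k))) := by
  have hpow : ((2 : ℝ) ^ (-(k : ℝ))) ^ (4 * a) = 2 ^ (-(4 * a * k)) := by
    rw [← Real.rpow_mul zero_le_two]; ring_nf
  exact hpow ▸ hc₁ _ (by positivity)
    (Real.rpow_lt_one_of_one_lt_of_neg one_lt_two (by simp; omega))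

theorem stmt17_general (a : ℝ) (K : Set ℂ)
    (c₁ : ℝ) (hc₁ : ∀ r : ℝ, 0 < r → r < 1 →
      volume {z : ℂ | Metric.infDist z K ≤ r} ≤ ENNReal.ofReal (c₁ * r ^ (4 * a)))
    (x₁ x₂ y₁ y₂ : ℝ) (hy : y₁ ≤ y₂)
    (k : ℕ) (hk : 1 ≤ k) :
    ((∫ t in y₁..y₂, 2 ^ (-(k : ℝ)) * (nHit K x₁ x₂ t k : ℝ)) ≤
        c₁ * 2 ^ (-(4 * a * (k : ℝ)))) ∧
    (∀ c₂ : ℝ, 0 < c₂ →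
      volume {t ∈ Icc y₁ y₂ | c₂ * 2 ^ ((1 - 4 * a) * (k : ℝ)) < (nHit K x₁ x₂ t k : ℝ)} ≤
        ENNReal.ofReal (c₁ / c₂)) := by
  set r : ℝ := 2 ^ (-(k : ℝ))
  have hr : 0 < r := by positivity
  have hc₁r := volume_infDist_le_two_rpow_neg_natCast_le hc₁ hk
  have hN : MeasurableSet {z : ℂ | infDist z K ≤ r} :=
    (isClosed_le (continuous_infDist_pt K) continuous_const).measurableSet
  set φ : ℝ → ℝ≥0∞ := fun t => volume {s : ℝ | infDist ((s : ℂ) + t * I) K ≤ r}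
  have hφ : Measurable φ := measurable_volume_horizontalSlice hN
  have hφc₁ : ∫⁻ t, φ t ≤ ENNReal.ofReal (c₁ * 2 ^ (-(4 * a * k))) :=
    (lintegral_volume_horizontalSlice hN).trans_le hc₁r
  have hnφ t : ENNReal.ofReal (r * nHit K x₁ x₂ t k) ≤ φ t :=
    ofReal_mul_nHit_le_volume_horizontalSlice K x₁ x₂ t k
  refine ⟨?_, fun c₂ hc₂ => ?_⟩
  · rw [intervalIntegral.integral_of_le hy]
    refine integral_le_of_ofReal_le_of_lintegral_le (ae_of_all _ fun t => by positivity)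
      hφ.aemeasurable (ae_of_all _ hnφ) ((setLIntegral_le_lintegral _ _).trans hφc₁) ?_
    exact ENNReal.ofReal_pos.1 ((measure_setOf_infDist_le_pos volume K hr).trans_le hc₁r) |>.le
  · have hscale : r * 2 ^ ((1 - 4 * a) * k) = 2 ^ (-(4 * a * k)) := by
      rw [← Real.rpow_add two_pos]; ring_nf
    refine (measure_mono fun t ht => ?_).trans
      (measure_ofReal_mul_le_le_ofReal_div hφ.aemeasurable hc₂ (by positivity) hφc₁)
    refine le_trans (ENNReal.ofReal_le_ofReal ?_) (hnφ t)
    rw [← hscale, mul_left_comm]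
    exact mul_le_mul_of_nonneg_left ht.2.le hr.le

/-- Let `K ⊆ ℂ` be bounded with `L₂({z : dist(z,K) ≤ r}) ≤ c₁ r^{4a}` for all
`r ∈ (0,1)` (upper Minkowski dimension at most `2 − 4a`).  Fix a rectangle
`F = [x₁,x₂] × [y₁,y₂]`, and for `t ∈ [y₁,y₂]` let `n_t(k)` be the number of dyadic
subintervals of length `2^{−k}` of the horizontal segment `L_t ∩ F` that intersect `K`.
Then `∫_{y₁}^{y₂} 2^{−k} n_t(k) dt ≤ c₁ 2^{−4ak}`, and consequently for every `c₂ > 0`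
the Lebesgue measure of `{t ∈ [y₁,y₂] : n_t(k) > c₂ 2^{(1−4a)k}}` is at most
`c₁/c₂`. -/
theorem stmt17 (a : ℝ) (ha : 0 < a) (K : Set ℂ) (hK : Bornology.IsBounded K)
    (c₁ : ℝ) (hc₁ : ∀ r : ℝ, 0 < r → r < 1 →
      volume {z : ℂ | Metric.infDist z K ≤ r} ≤ ENNReal.ofReal (c₁ * r ^ (4 * a)))
    (x₁ x₂ y₁ y₂ : ℝ) (hx : x₁ ≤ x₂) (hy : y₁ ≤ y₂)
    (k : ℕ) (hk : 1 ≤ k) :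
    ((∫ t in y₁..y₂, 2 ^ (-(k : ℝ)) * (nHit K x₁ x₂ t k : ℝ)) ≤
        c₁ * 2 ^ (-(4 * a * (k : ℝ)))) ∧
    (∀ c₂ : ℝ, 0 < c₂ →
      volume {t ∈ Icc y₁ y₂ | c₂ * 2 ^ ((1 - 4 * a) * (k : ℝ)) < (nHit K x₁ x₂ t k : ℝ)} ≤
        ENNReal.ofReal (c₁ / c₂)) :=
  stmt17_general a K c₁ hc₁ x₁ x₂ y₁ y₂ hy k hk

end
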